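/- Call a finite sequence $(x_1, \dots, x_n)$ of real numbers alternating (down-up) if $x_j \le x_{j-1}$ for even $j$ and $x_j \ge x_{j-1}$ for odd $j > 1$. For $\alpha \le \beta$, the set $\mathcal{P}_n^{[\alpha,\beta]}$ of alternating sequences in $[\alpha,\beta]^n$ has Lebesgue measure (volume) equal to $\frac{A_n}{n!}(\beta - \alpha)^n$, where $A_n$ is the number of down-up alternating permutations of $\{1, \dots, n\}$ (the $n$th Euler zigzag number). -/

import Mathlib

/-- A permutation of `Fin n` is down-up alternating if `σ 0 > σ 1 < σ 2 > ⋯`. -/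
def DownUp (n : ℕ) (σ : Equiv.Perm (Fin n)) : Prop :=
  ∀ i : Fin n, ∀ h : (i : ℕ) + 1 < n,
    if (i : ℕ) % 2 = 0 then σ ⟨(i : ℕ) + 1, h⟩ < σ i else σ i < σ ⟨(i : ℕ) + 1, h⟩

open Classical in
/-- The `n`th Euler zigzag number: the number of down-up alternating permutations
of `{1, …, n}`. -/
noncomputable def zigzag (n : ℕ) : ℕ :=
  (Finset.univ.filter (DownUp n)).card

/-- A finite sequence `x : Fin n → ℝ` (thought of as `x₁, …, xₙ`, 1-indexed) is
alternating (down-up) if `x_j ≤ x_{j-1}` for even `j` and `x_j ≥ x_{j-1}` for odd `j > 1`.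
In the 0-indexed encoding, position `i` corresponds to `j = i + 1`. -/
def IsAltSeq {n : ℕ} (x : Fin n → ℝ) : Prop :=
  ∀ i : Fin n, 0 < (i : ℕ) →
    if (i : ℕ) % 2 = 1 then
      x i ≤ x ⟨(i : ℕ) - 1, lt_of_le_of_lt (Nat.sub_le _ _) i.isLt⟩
    else
      x ⟨(i : ℕ) - 1, lt_of_le_of_lt (Nat.sub_le _ _) i.isLt⟩ ≤ x i

/-- The gap map: `f₁ = x₁`, `f_i = x_{i-1} - x_i` for even `i`, `f_i = x_i - x_{i-1}`
for odd `i > 1` (1-indexed; position `i : Fin n` corresponds to index `i + 1`). -/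
def gapMap (n : ℕ) (x : Fin n → ℝ) : Fin n → ℝ := fun i =>
  if (i : ℕ) = 0 then x i
  else if (i : ℕ) % 2 = 1 then
    x ⟨(i : ℕ) - 1, lt_of_le_of_lt (Nat.sub_le _ _) i.isLt⟩ - x i
  else
    x i - x ⟨(i : ℕ) - 1, lt_of_le_of_lt (Nat.sub_le _ _) i.isLt⟩

/-!
Up to the null set of sequences with a repeated entry, any permutation-invariant set `A ⊆ ℝⁿ`
splits into the `n!` pieces `A ∩ {x | x ∘ σ strictly increasing}`, which are exchanged by the
volume-preserving coordinate permutations and so have equal volume. On the piece of `σ`, a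
sequence is alternating exactly when `σ⁻¹` is a down-up permutation, so the alternating
sequences of `A` fill `A_n` of the `n!` pieces. Take `A = [α, β]ⁿ`.
-/

open MeasureTheory Set Function
open scoped Finset

section

variable {ι : Type*} [Fintype ι]

theorem volume_setOf_not_injective : volume {x : ι → ℝ | ¬ Injective x} = 0 := by
  classical
  have hsub : {x : ι → ℝ | ¬ Injective x} ⊆ ⋃ (i : ι) (j : ι) (_ : i ≠ j), {x | x i = x j} := by
    intro x hx
    obtain ⟨i, j, hij, hne⟩ : ∃ i j, x i = x j ∧ i ≠ j := by simpa [Injective] using hx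
    exact mem_iUnion₂.2 ⟨i, j, mem_iUnion.2 ⟨hne, hij⟩⟩
  refine measure_mono_null hsub <| measure_iUnion_null fun i => measure_iUnion_null fun j =>
    measure_iUnion_null fun hij => ?_
  let f : (ι → ℝ) →ₗ[ℝ] ℝ := LinearMap.proj (R := ℝ) (φ := fun _ => ℝ) i - LinearMap.proj j
  have hker : {x : ι → ℝ | x i = x j} = LinearMap.ker f := by ext; simp [f, sub_eq_zero]
  rw [hker]
  refine Measure.addHaar_submodule _ _ fun htop => ?_
  simpa [f, hij.symm] using LinearMap.congr_fun (LinearMap.ker_eq_top.1 htop) (Pi.single i 1)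

theorem volume_preimage_comp_perm (σ : Equiv.Perm ι) (s : Set (ι → ℝ)) :
    volume ((fun x : ι → ℝ => x ∘ σ) ⁻¹' s) = volume s :=
  (volume_preserving_arrowCongr' σ.symm (.refl ℝ) (.id volume)).measure_preimage_equiv s

end

section

variable {n : ℕ}

def chamber (σ : Equiv.Perm (Fin n)) : Set (Fin n → ℝ) := {x | StrictMono (x ∘ σ)}

theorem measurableSet_chamber (σ : Equiv.Perm (Fin n)) : MeasurableSet (chamber σ) := by
  have : chamber σ = ⋂ (a : Fin n) (b : Fin n) (_ : a < b), {x | x (σ a) < x (σ b)} := by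
    ext x; simp [chamber, StrictMono]
  rw [this]
  exact .iInter fun a => .iInter fun b => .iInter fun _ =>
    measurableSet_lt (measurable_pi_apply _) (measurable_pi_apply _)

theorem eq_sort_of_mem_chamber {x : Fin n → ℝ} {σ : Equiv.Perm (Fin n)} (hx : x ∈ chamber σ) :
    σ = Tuple.sort x :=
  Tuple.eq_sort_iff.2 ⟨hx.monotone, fun _ _ hij heq => absurd (hx.injective heq) hij.ne⟩

theorem pairwise_disjoint_chamber : Pairwise (Disjoint on (chamber (n := n))) :=
  fun _ _ hne => Set.disjoint_left.2 fun _ hσ hτ =>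
    hne ((eq_sort_of_mem_chamber hσ).trans (eq_sort_of_mem_chamber hτ).symm)

theorem Function.Injective.mem_chamber_sort {x : Fin n → ℝ} (hx : Injective x) :
    x ∈ chamber (Tuple.sort x) :=
  (Tuple.monotone_sort x).strictMono_of_injective (hx.comp (Tuple.sort x).injective)

theorem volume_compl_iUnion_chamber : volume (⋃ σ, chamber σ : Set (Fin n → ℝ))ᶜ = 0 :=
  measure_mono_null (fun _ hx (hinj : Injective _) => hx (mem_iUnion.2 ⟨_, hinj.mem_chamber_sort⟩))
    volume_setOf_not_injective

variable {A : Set (Fin n → ℝ)}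

theorem volume_inter_chamber (hA : ∀ σ : Equiv.Perm (Fin n), ∀ x ∈ A, x ∘ σ ∈ A)
    (σ : Equiv.Perm (Fin n)) : volume (A ∩ chamber σ) = volume (A ∩ chamber 1) := by
  have : A ∩ chamber σ = (fun x => x ∘ σ) ⁻¹' (A ∩ chamber 1) := by
    ext x
    refine ⟨fun ⟨hxA, hx⟩ => ⟨hA σ x hxA, hx⟩, fun ⟨hxA, hx⟩ => ⟨?_, hx⟩⟩
    simpa [comp_assoc] using hA σ⁻¹ _ hxA
  rw [this, volume_preimage_comp_perm]

theorem volume_inter_biUnion_chamber (hA : ∀ σ : Equiv.Perm (Fin n), ∀ x ∈ A, x ∘ σ ∈ A)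
    (hAm : MeasurableSet A) (F : Finset (Equiv.Perm (Fin n))) :
    volume (A ∩ ⋃ σ ∈ F, chamber σ) = F.card * volume (A ∩ chamber 1) := by
  rw [inter_iUnion₂, measure_biUnion_finset
    (fun _ _ _ _ hne => (pairwise_disjoint_chamber hne).mono inter_subset_right inter_subset_right)
    (fun σ _ => hAm.inter (measurableSet_chamber σ))]
  simp [volume_inter_chamber hA]

theorem volume_eq_factorial_mul (hA : ∀ σ : Equiv.Perm (Fin n), ∀ x ∈ A, x ∘ σ ∈ A)
    (hAm : MeasurableSet A) : volume A = n.factorial * volume (A ∩ chamber 1) := by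
  rw [← measure_inter_conull volume_compl_iUnion_chamber,
    show (⋃ σ, chamber σ) = ⋃ σ ∈ Finset.univ, chamber σ by simp,
    volume_inter_biUnion_chamber hA hAm, Finset.card_univ, Fintype.card_perm, Fintype.card_fin]


theorem isAltSeq_iff_forall_succ {x : Fin n → ℝ} :
    IsAltSeq x ↔ ∀ i : Fin n, ∀ h : (i : ℕ) + 1 < n,
      if (i : ℕ) % 2 = 0 then x ⟨i + 1, h⟩ ≤ x i else x i ≤ x ⟨i + 1, h⟩ := by
  constructor
  · intro hx i h
    have := hx ⟨i + 1, h⟩ i.succ_pos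
    simp only [add_tsub_cancel_right, Fin.eta] at this
    split_ifs at this ⊢ <;> omega
  · rintro hx ⟨_ | i, hi⟩ hj
    · exact absurd hj (lt_irrefl 0)
    · have := hx ⟨i, by omega⟩ hi
      dsimp only at this
      simp only [add_tsub_cancel_right]
      split_ifs at this ⊢ <;> omega

theorem isAltSeq_iff_downUp_inv {x : Fin n → ℝ} {σ : Equiv.Perm (Fin n)} (hx : x ∈ chamber σ) :
    IsAltSeq x ↔ DownUp n σ⁻¹ := by
  -- a chamber contains only injective sequences, so the weak inequalities of `IsAltSeq` are strict
  have hle : ∀ a b, a ≠ b → (x a ≤ x b ↔ σ⁻¹ a < σ⁻¹ b) := fun a b hab => by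
    rw [← (σ⁻¹.injective.ne hab).le_iff_lt]
    simpa using hx.le_iff_le (a := σ⁻¹ a) (b := σ⁻¹ b)
  rw [isAltSeq_iff_forall_succ]
  refine forall_congr' fun i => forall_congr' fun h => ?_
  split_ifs <;> exact hle _ _ (Fin.ne_of_val_ne (by simp))

open Classical in
theorem card_filter_downUp_inv :
    #{σ : Equiv.Perm (Fin n) | DownUp n σ⁻¹} = zigzag n := by
  rw [zigzag]
  exact Finset.card_equiv (Equiv.inv _) (by simp)

theorem factorial_mul_volume_inter_setOf_isAltSeq {A : Set (Fin n → ℝ)}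
    (hA : ∀ σ : Equiv.Perm (Fin n), ∀ x ∈ A, x ∘ σ ∈ A) (hAm : MeasurableSet A) :
    n.factorial * volume (A ∩ {x | IsAltSeq x}) = zigzag n * volume A := by
  classical
  have hsplit : A ∩ {x | IsAltSeq x} ∩ ⋃ σ, chamber σ =
      A ∩ ⋃ σ ∈ ({σ | DownUp n σ⁻¹} : Finset (Equiv.Perm (Fin n))), chamber σ := by
    ext x
    simp only [mem_inter_iff, mem_iUnion, mem_ofPred_eq, Finset.mem_filter_univ, exists_prop]
    constructor
    · rintro ⟨⟨hxA, hx⟩, σ, hσ⟩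
      exact ⟨hxA, σ, (isAltSeq_iff_downUp_inv hσ).1 hx, hσ⟩
    · rintro ⟨hxA, σ, hdu, hσ⟩
      exact ⟨⟨hxA, (isAltSeq_iff_downUp_inv hσ).2 hdu⟩, σ, hσ⟩
  rw [← measure_inter_conull volume_compl_iUnion_chamber, hsplit,
    volume_inter_biUnion_chamber hA hAm, card_filter_downUp_inv, volume_eq_factorial_mul hA hAm]
  ring

end

/-- The volume of the set of alternating sequences in `[α,β]^n` is `(A_n/n!) (β-α)^n`,
where `A_n` is the `n`th Euler zigzag number. -/
theorem volume_alternating_sequences (n : ℕ) (α β : ℝ) (hab : α ≤ β) :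
    MeasureTheory.volume
      {x : Fin n → ℝ | (∀ i, x i ∈ Set.Icc α β) ∧ IsAltSeq x}
      = ENNReal.ofReal ((zigzag n : ℝ) / (Nat.factorial n) * (β - α) ^ n) := by
  set box : Set (Fin n → ℝ) := univ.pi fun _ => Icc α β
  have hbox : volume box = ENNReal.ofReal ((β - α) ^ n) := by
    rw [volume_pi_pi]
    simp [Real.volume_Icc, ENNReal.ofReal_pow (sub_nonneg.2 hab)]
  have key := factorial_mul_volume_inter_setOf_isAltSeq (A := box)
    (fun σ _ hx i _ => hx (σ i) trivial) (.univ_pi fun _ => measurableSet_Icc)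
  rw [show {x : Fin n → ℝ | (∀ i, x i ∈ Icc α β) ∧ IsAltSeq x} = box ∩ {x | IsAltSeq x} by
      ext; simp only [box, mem_inter_iff, mem_univ_pi, mem_ofPred_eq],
    div_mul_eq_mul_div, ENNReal.ofReal_div_of_pos (by positivity),
    ENNReal.ofReal_mul (by positivity), ENNReal.ofReal_natCast, ENNReal.ofReal_natCast,
    ENNReal.eq_div_iff (by positivity) (ENNReal.natCast_ne_top _), key, hbox]
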